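/- For any leaf ℓ in the DTSemNet encoding, val(ℓ) ≤ ∑_{i=1}^{k} |v i|, with equality iff every decision on the path of ℓ is satisfied (ε_ℓ(i)·v i > 0 for all i ∈ path(ℓ)). -/

import Mathlib

noncomputable def ReLU (x : ℝ) : ℝ := max x 0

theorem ReLU_add_ReLU_neg (x : ℝ) : ReLU x + ReLU (-x) = |x| := by
  rcases le_total x 0 with h | h
  · simp [ReLU, h, abs_of_nonpos h]
  · simp [ReLU, h, abs_of_nonneg h]

theorem ReLU_le_abs (x : ℝ) : ReLU x ≤ |x| :=
  max_le (le_abs_self x) (abs_nonneg x)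

theorem ReLU_eq_abs_iff {x : ℝ} (hx : x ≠ 0) : ReLU x = |x| ↔ 0 < x := by
  rcases hx.lt_or_gt with h | h
  · simp [ReLU, h.le, abs_of_neg h, h.not_gt, h.ne]
  · simp [ReLU, h.le, abs_of_pos h, h]

theorem sum_ReLU_le_sum_abs {ι : Type*} (s : Finset ι) (x : ι → ℝ) :
    ∑ i ∈ s, ReLU (x i) ≤ ∑ i ∈ s, |x i| :=
  Finset.sum_le_sum fun i _ => ReLU_le_abs (x i)

theorem sum_ReLU_eq_sum_abs_iff {ι : Type*} {s : Finset ι} {x : ι → ℝ} (hx : ∀ i ∈ s, x i ≠ 0) :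
    ∑ i ∈ s, ReLU (x i) = ∑ i ∈ s, |x i| ↔ ∀ i ∈ s, 0 < x i := by
  rw [Finset.sum_eq_sum_iff_of_le fun i _ => ReLU_le_abs (x i)]
  exact forall₂_congr fun i hi => ReLU_eq_abs_iff (hx i hi)

open Finset in
theorem leaf_value_le_general (k : ℕ) (L : Type)
    (v : Fin k → ℝ) (hv : ∀ i, v i ≠ 0)
    (path : L → Finset (Fin k)) (ε : L → Fin k → ℝ)
    (hε : ∀ ℓ i, ε ℓ i = 1 ∨ ε ℓ i = -1)
    (val : L → ℝ)
    (hval : ∀ ℓ, val ℓ = (∑ i ∈ (path ℓ)ᶜ, (ReLU (v i) + ReLU (-v i)))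
      + ∑ i ∈ path ℓ, ReLU (ε ℓ i * v i)) :
    ∀ ℓ, val ℓ ≤ ∑ i, |v i| ∧
      (val ℓ = ∑ i, |v i| ↔ ∀ i ∈ path ℓ, 0 < ε ℓ i * v i) := by
  intro ℓ
  have habs : ∀ i, |ε ℓ i * v i| = |v i| := fun i => by
    rcases hε ℓ i with h | h <;> simp [h]
  have hne : ∀ i ∈ path ℓ, ε ℓ i * v i ≠ 0 := fun i _ =>
    abs_ne_zero.mp (by rw [habs]; exact abs_ne_zero.mpr (hv i))
  have hval' : val ℓ = ∑ i ∈ (path ℓ)ᶜ, |v i| + ∑ i ∈ path ℓ, ReLU (ε ℓ i * v i) := by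
    simp only [hval, ReLU_add_ReLU_neg]
  have htotal : ∑ i, |v i| = ∑ i ∈ (path ℓ)ᶜ, |v i| + ∑ i ∈ path ℓ, |ε ℓ i * v i| := by
    simp only [habs]
    exact (sum_compl_add_sum _ _).symm
  rw [hval', htotal, add_le_add_iff_left, add_right_inj]
  exact ⟨sum_ReLU_le_sum_abs _ _, sum_ReLU_eq_sum_abs_iff hne⟩

open Finset in
/-- Every leaf value is at most `∑ i |v i|`, with equality iff every decision
on the leaf's path is satisfied. -/
theorem leaf_value_le (k : ℕ) (L : Type) [Fintype L]
    (v : Fin k → ℝ) (hv : ∀ i, v i ≠ 0)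
    (path : L → Finset (Fin k)) (ε : L → Fin k → ℝ)
    (hε : ∀ ℓ i, ε ℓ i = 1 ∨ ε ℓ i = -1)
    (val : L → ℝ)
    (hval : ∀ ℓ, val ℓ = (∑ i ∈ (path ℓ)ᶜ, (ReLU (v i) + ReLU (-v i)))
      + ∑ i ∈ path ℓ, ReLU (ε ℓ i * v i)) :
    ∀ ℓ, val ℓ ≤ ∑ i, |v i| ∧
      (val ℓ = ∑ i, |v i| ↔ ∀ i ∈ path ℓ, 0 < ε ℓ i * v i) :=
  leaf_value_le_general k L v hv path ε hε val hval
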